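/- Let H be a real Hilbert space and let T be a bounded linear operator on H such that M_T = S_{H₀} for some finite dimensional subspace H₀ of H and sup{‖Tz‖ : z ∈ H₀^⊥, ‖z‖ = 1} < ‖T‖. Let A be a bounded linear operator on H with M_T ⊆ M_A and let ε ∈ [0,1). Then T ⊥_B^ε A if and only if there exists x ∈ M_T such that |⟨Tx, Ax⟩| ≤ ε‖Tx‖‖Ax‖. -/

import Mathlib

open RealInnerProductSpace

/-!
If `|⟪T x, A x⟫| ≤ ε ‖T‖ ‖A x‖` at some `x ∈ M_T`, evaluating `‖(T + λ A) x‖²` at that `x`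
gives `T ⊥_B^ε A`. Conversely, suppose `|⟪T x, A x⟫| > ε ‖T‖ ‖A‖` on the unit sphere of `H₀`
(using `M_T ⊆ M_A`). This continuous even function then has constant sign there, by the
intermediate value theorem along normalized segments; say it is negative (otherwise replace `A`
by `-A`). By compactness it is at most `-(ε ‖T‖ ‖A‖ + δ)` for some `δ > 0`. Split a unit vector
as `z = u + w` with `u ∈ H₀`, `w ∈ H₀ᗮ`. The vectors `T u` and `T w` are orthogonal, and `T` has
norm strictly less than `‖T‖` on `H₀ᗮ`. Together these give
`‖(T + λ A) z‖² ≤ ‖T‖² - 2 λ (ε ‖T‖ ‖A‖ + δ) + O(λ²)` uniformly in `z`, which contradicts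
`T ⊥_B^ε A` for small `λ > 0`.
-/

section Homogeneity

variable {E F : Type*} [NormedAddCommGroup E] [NormedSpace ℝ E] [NormedAddCommGroup F]
  [NormedSpace ℝ F] {K : Submodule ℝ E} {x : E}

lemma norm_map_eq_mul_norm_of_forall_norm_eq_one (T : E →L[ℝ] F) {c : ℝ}
    (h : ∀ y ∈ K, ‖y‖ = 1 → ‖T y‖ = c) (hx : x ∈ K) : ‖T x‖ = c * ‖x‖ := by
  rcases eq_or_ne x 0 with rfl | hx0
  · simp
  have hc := h _ (K.smul_mem ‖x‖⁻¹ hx) (norm_smul_inv_norm (𝕜 := ℝ) hx0)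
  rw [map_smul, norm_smul, norm_inv, norm_norm] at hc
  field_simp at hc
  linarith

lemma norm_map_le_mul_norm_of_forall_norm_eq_one (T : E →L[ℝ] F) {c : ℝ}
    (h : ∀ y ∈ K, ‖y‖ = 1 → ‖T y‖ ≤ c) (hx : x ∈ K) : ‖T x‖ ≤ c * ‖x‖ := by
  rcases eq_or_ne x 0 with rfl | hx0
  · simp
  have hc := h _ (K.smul_mem ‖x‖⁻¹ hx) (norm_smul_inv_norm (𝕜 := ℝ) hx0)
  rw [map_smul, norm_smul, norm_inv, norm_norm, inv_mul_le_iff₀ (norm_pos_iff.2 hx0)] at hc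
  linarith

end Homogeneity

section InnerProduct

variable {E F : Type*} [NormedAddCommGroup E] [InnerProductSpace ℝ E] [NormedAddCommGroup F]
  [InnerProductSpace ℝ F]

lemma inner_map_le_of_forall_norm_eq_one (T A : E →L[ℝ] F) {K : Submodule ℝ E} {c : ℝ}
    (h : ∀ y ∈ K, ‖y‖ = 1 → ⟪T y, A y⟫ ≤ c) {x : E} (hx : x ∈ K) :
    ⟪T x, A x⟫ ≤ c * ‖x‖ ^ 2 := by
  rcases eq_or_ne x 0 with rfl | hx0
  · simp
  have hc := h _ (K.smul_mem ‖x‖⁻¹ hx) (norm_smul_inv_norm (𝕜 := ℝ) hx0)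
  rw [map_smul, map_smul, real_inner_smul_left, real_inner_smul_right, ← mul_assoc,
    ← sq, inv_pow, inv_mul_le_iff₀ (by positivity)] at hc
  linarith

lemma inner_map_map_le (T A : E →L[ℝ] F) (x y : E) :
    ⟪T x, A y⟫ ≤ ‖T‖ * ‖A‖ * (‖x‖ * ‖y‖) :=
  calc ⟪T x, A y⟫ ≤ ‖T x‖ * ‖A y‖ := real_inner_le_norm _ _
    _ ≤ ‖T‖ * ‖x‖ * (‖A‖ * ‖y‖) :=
      mul_le_mul (T.le_opNorm x) (A.le_opNorm y) (norm_nonneg _) (by positivity)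
    _ = ‖T‖ * ‖A‖ * (‖x‖ * ‖y‖) := by ring

lemma norm_add_smul_apply_sq (T A : E →L[ℝ] F) (l : ℝ) (z : E) :
    ‖(T + l • A) z‖ ^ 2 = ‖T z‖ ^ 2 + 2 * l * ⟪T z, A z⟫ + l ^ 2 * ‖A z‖ ^ 2 := by
  show ‖T z + l • A z‖ ^ 2 = _
  rw [norm_add_sq_real, real_inner_smul_right, norm_smul, mul_pow, Real.norm_eq_abs, sq_abs]
  ring

lemma inner_map_map_eq_zero_of_norm_map_eq (T : E →L[ℝ] F) {v w : E}
    (hv : ‖T v‖ = ‖T‖ * ‖v‖) (hvw : ⟪v, w⟫ = 0) : ⟪T v, T w⟫ = 0 := by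
  -- `t ↦ ‖T‖² ‖v + t w‖² - ‖T (v + t w)‖²` is a nonnegative quadratic without constant term
  have hquad : ∀ t : ℝ,
      0 ≤ (‖T‖ ^ 2 * ‖w‖ ^ 2 - ‖T w‖ ^ 2) * (t * t) + (-2 * ⟪T v, T w⟫) * t + 0 := by
    intro t
    have hle := pow_le_pow_left₀ (norm_nonneg _) (T.le_opNorm (v + t • w)) 2
    simp only [map_add, map_smul, mul_pow, norm_add_sq_real, real_inner_smul_right, hvw,
      norm_smul, hv, Real.norm_eq_abs, sq_abs] at hle
    nlinarith [hle]
  have := discrim_le_zero hquad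
  rw [discrim] at this
  nlinarith [sq_nonneg ⟪T v, T w⟫]

lemma opNorm_sq_le_of_forall_norm_eq_one [Nontrivial E] (S : E →L[ℝ] F) {M : ℝ}
    (h : ∀ z : E, ‖z‖ = 1 → ‖S z‖ ^ 2 ≤ M) : ‖S‖ ^ 2 ≤ M := by
  obtain ⟨z, hz⟩ := exists_norm_eq E zero_le_one
  have hM : 0 ≤ M := (sq_nonneg _).trans (h z hz)
  have hS : ‖S‖ ≤ √M := S.opNorm_le_of_unit_norm (Real.sqrt_nonneg M) fun z hz =>
    Real.le_sqrt_of_sq_le (h z hz)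
  calc ‖S‖ ^ 2 ≤ √M ^ 2 := pow_le_pow_left₀ (norm_nonneg S) hS 2
    _ = M := Real.sq_sqrt hM

end InnerProduct

section Sphere

variable {E : Type*} [NormedAddCommGroup E] [NormedSpace ℝ E]

lemma Submodule.exists_mem_norm_eq_one_apply_eq_of_even (K : Submodule ℝ E) {f : E → ℝ}
    (hf : Continuous f) (heven : ∀ x, f (-x) = f x) {x y : E} (hxK : x ∈ K) (hyK : y ∈ K)
    (hx : ‖x‖ = 1) (hy : ‖y‖ = 1) {a : ℝ} (hxa : f x ≤ a) (hay : a ≤ f y) :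
    ∃ z ∈ K, ‖z‖ = 1 ∧ f z = a := by
  by_cases hxy : y = -x
  · exact ⟨x, hxK, hx, le_antisymm hxa (hay.trans (by rw [hxy, heven]))⟩
  set p : ℝ → E := fun t => (1 - t) • x + t • y
  have hp : ∀ t ∈ Set.Icc (0 : ℝ) 1, p t ≠ 0 := by
    rintro t ⟨ht0, ht1⟩ hpt
    have hnorm : ‖(1 - t) • x‖ = ‖t • y‖ := by
      rw [eq_neg_of_add_eq_zero_left hpt, norm_neg]
    rw [norm_smul, norm_smul, hx, hy, Real.norm_of_nonneg (by linarith),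
      Real.norm_of_nonneg ht0] at hnorm
    obtain rfl : t = 1 / 2 := by linarith
    apply hxy
    rw [eq_neg_iff_add_eq_zero, add_comm]
    calc x + y = (2 : ℝ) • p (1 / 2) := by simp only [p, smul_add, smul_smul]; norm_num
      _ = 0 := by rw [hpt, smul_zero]
  have hcont : ContinuousOn (fun t => f (‖p t‖⁻¹ • p t)) (Set.Icc 0 1) := by
    have hpc : Continuous p := by fun_prop
    exact hf.comp_continuousOn ((hpc.norm.continuousOn.inv₀ fun t ht => norm_ne_zero_iff.2
      (hp t ht)).smul hpc.continuousOn)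
  obtain ⟨t, ht, hft⟩ := intermediate_value_Icc zero_le_one hcont
    ⟨by simpa [p, hx] using hxa, by simpa [p, hy] using hay⟩
  exact ⟨_, K.smul_mem _ (K.add_mem (K.smul_mem _ hxK) (K.smul_mem _ hyK)),
    norm_smul_inv_norm (𝕜 := ℝ) (hp t ht), hft⟩

end Sphere

section OperatorNorm

variable {E F : Type*} [NormedAddCommGroup E] [InnerProductSpace ℝ E] [NormedAddCommGroup F]
  [InnerProductSpace ℝ F] {T A : E →L[ℝ] F}

lemma opNorm_add_smul_sq_ge_of_inner_le {x : E} (hx : ‖x‖ = 1) (hTx : ‖T x‖ = ‖T‖) {ε : ℝ}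
    (hε : 0 ≤ ε) (h : |⟪T x, A x⟫| ≤ ε * ‖T x‖ * ‖A x‖) (l : ℝ) :
    ‖T + l • A‖ ^ 2 ≥ ‖T‖ ^ 2 - 2 * ε * ‖T‖ * ‖l • A‖ := by
  have hle : ‖(T + l • A) x‖ ^ 2 ≤ ‖T + l • A‖ ^ 2 :=
    pow_le_pow_left₀ (norm_nonneg _) (by simpa [hx] using (T + l • A).le_opNorm x) 2
  have hAx : ‖A x‖ ≤ ‖A‖ := by simpa [hx] using A.le_opNorm x
  have hcross : -(l * ⟪T x, A x⟫) ≤ |l| * (ε * ‖T‖ * ‖A‖) :=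
    calc -(l * ⟪T x, A x⟫) ≤ |l| * |⟪T x, A x⟫| := by rw [← abs_mul]; exact neg_le_abs _
      _ ≤ |l| * (ε * ‖T‖ * ‖A‖) := by
        gcongr
        rw [hTx] at h
        exact h.trans (by gcongr)
  rw [norm_add_smul_apply_sq, hTx] at hle
  rw [norm_smul, Real.norm_eq_abs]
  nlinarith [sq_nonneg l, sq_nonneg ‖A x‖]

end OperatorNorm

section Decomposition

variable {H F : Type*} [NormedAddCommGroup H] [InnerProductSpace ℝ H] [NormedAddCommGroup F]
  [InnerProductSpace ℝ F] {T A : H →L[ℝ] F} {H₀ : Submodule ℝ H} {k : ℝ}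

lemma norm_map_add_sq_le (hTu : ∀ u ∈ H₀, ‖T u‖ = ‖T‖ * ‖u‖) (hTw : ∀ w ∈ H₀ᗮ, ‖T w‖ ≤ k * ‖w‖)
    {u w : H} (hu : u ∈ H₀) (hw : w ∈ H₀ᗮ) :
    ‖T (u + w)‖ ^ 2 ≤ ‖T‖ ^ 2 * ‖u‖ ^ 2 + k ^ 2 * ‖w‖ ^ 2 := by
  rw [map_add, norm_add_sq_real, inner_map_map_eq_zero_of_norm_map_eq T (hTu u hu)
    (Submodule.inner_right_of_mem_orthogonal hu hw), hTu u hu]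
  nlinarith [pow_le_pow_left₀ (norm_nonneg _) (hTw w hw) 2]

lemma inner_map_add_le {b : ℝ} {u : H} (hu : ⟪T u, A u⟫ ≤ -b * ‖u‖ ^ 2) (w : H) :
    ⟪T (u + w), A (u + w)⟫ ≤ -b * ‖u‖ ^ 2 + ‖T‖ * ‖A‖ * (‖w‖ * (‖u‖ + ‖u + w‖)) := by
  have hsplit : ⟪T (u + w), A (u + w)⟫ = ⟪T u, A u⟫ + ⟪T u, A w⟫ + ⟪T w, A (u + w)⟫ := by
    rw [map_add T, inner_add_left, map_add A u w, inner_add_right]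
  have h₁ := inner_map_map_le T A u w
  have h₂ := inner_map_map_le T A w (u + w)
  rw [hsplit]
  linarith

variable [H₀.HasOrthogonalProjection]

lemma exists_norm_add_smul_apply_sq_le (hk0 : 0 ≤ k) (hk : k < ‖T‖)
    (hTu : ∀ u ∈ H₀, ‖T u‖ = ‖T‖ * ‖u‖) (hTw : ∀ w ∈ H₀ᗮ, ‖T w‖ ≤ k * ‖w‖) {b : ℝ} (hb : 0 ≤ b)
    (hA : ∀ u ∈ H₀, ⟪T u, A u⟫ ≤ -b * ‖u‖ ^ 2) :
    ∃ D ≥ 0, ∀ l ≥ 0, ∀ z : H, ‖z‖ = 1 →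
      ‖(T + l • A) z‖ ^ 2 ≤ ‖T‖ ^ 2 - 2 * l * b + l ^ 2 * D := by
  set c := ‖T‖ ^ 2 - k ^ 2
  set C := b + 2 * ‖T‖ * ‖A‖
  have hc : 0 < c := by nlinarith
  refine ⟨‖A‖ ^ 2 + C ^ 2 / c, by positivity, fun l hl z hz => ?_⟩
  set u := H₀.starProjection z
  set w := z - u
  have hu : u ∈ H₀ := H₀.starProjection_apply_mem z
  have hw : w ∈ H₀ᗮ := H₀.sub_starProjection_mem_orthogonal z
  have hzuw : z = u + w := (add_sub_cancel u z).symm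
  have hpyth : ‖u‖ ^ 2 + ‖w‖ ^ 2 = 1 := by
    rw [← one_pow 2, ← hz, hzuw, norm_add_sq_real, Submodule.inner_right_of_mem_orthogonal hu hw]
    ring
  have hu1 : ‖u‖ ≤ 1 := by nlinarith [norm_nonneg u, norm_nonneg w]
  have hw1 : ‖w‖ ≤ 1 := by nlinarith [norm_nonneg u, norm_nonneg w]
  have hTz : ‖T z‖ ^ 2 ≤ ‖T‖ ^ 2 - c * ‖w‖ ^ 2 := by
    have := hzuw ▸ norm_map_add_sq_le hTu hTw hu hw
    nlinarith
  have hTAz : ⟪T z, A z⟫ ≤ -b + C * ‖w‖ := by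
    have := hzuw ▸ inner_map_add_le (hA u hu) w
    rw [hz] at this
    have hTAw : 0 ≤ ‖T‖ * ‖A‖ * ‖w‖ := by positivity
    nlinarith [mul_nonneg hb (mul_nonneg (norm_nonneg w) (sub_nonneg.2 hw1)),
      mul_le_mul_of_nonneg_left hu1 hTAw]
  have hAz : ‖A z‖ ≤ ‖A‖ := by simpa [hz] using A.le_opNorm z
  -- AM-GM: `2 l C ‖w‖ ≤ c ‖w‖² + l² C² / c`
  have hamgm : 2 * l * C * ‖w‖ ≤ c * ‖w‖ ^ 2 + l ^ 2 * (C ^ 2 / c) := by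
    have := sq_nonneg (c * ‖w‖ - l * C)
    have hcC : c * (C ^ 2 / c) = C ^ 2 := mul_div_cancel₀ _ hc.ne'
    nlinarith
  rw [norm_add_smul_apply_sq]
  nlinarith [mul_le_mul_of_nonneg_left hTAz (by positivity : (0 : ℝ) ≤ 2 * l),
    pow_le_pow_left₀ (norm_nonneg _) hAz 2, sq_nonneg l]

end Decomposition

section Perturbation

variable {H F : Type*} [NormedAddCommGroup H] [InnerProductSpace ℝ H] [NormedAddCommGroup F]
  [InnerProductSpace ℝ F] {T A : H →L[ℝ] F} {H₀ : Submodule ℝ H} {k a : ℝ}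

lemma exists_pos_opNorm_add_smul_sq_lt [H₀.HasOrthogonalProjection] (hk0 : 0 ≤ k) (hk : k < ‖T‖)
    (hTu : ∀ u ∈ H₀, ‖T u‖ = ‖T‖ * ‖u‖) (hTw : ∀ w ∈ H₀ᗮ, ‖T w‖ ≤ k * ‖w‖) {b : ℝ} (hb : 0 ≤ b)
    (hA : ∀ u ∈ H₀, ⟪T u, A u⟫ ≤ -b * ‖u‖ ^ 2) (hab : a < b) :
    ∃ l > 0, ‖T + l • A‖ ^ 2 < ‖T‖ ^ 2 - 2 * l * a := by
  obtain ⟨D, hD0, hD⟩ := exists_norm_add_smul_apply_sq_le hk0 hk hTu hTw hb hA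
  have : Nontrivial H := by
    by_contra h
    rw [not_nontrivial_iff_subsingleton] at h
    rw [Subsingleton.elim T 0, norm_zero] at hk
    exact hk.not_ge hk0
  set l := (b - a) / (D + 1)
  have hl : 0 < l := div_pos (by linarith) (by linarith)
  have hlD : l * (D + 1) = b - a := div_mul_cancel₀ _ (by linarith)
  refine ⟨l, hl, ?_⟩
  calc ‖T + l • A‖ ^ 2 ≤ ‖T‖ ^ 2 - 2 * l * b + l ^ 2 * D :=
        opNorm_sq_le_of_forall_norm_eq_one _ (hD l hl.le)
    _ < ‖T‖ ^ 2 - 2 * l * a := by nlinarith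

variable [FiniteDimensional ℝ H₀]

lemma exists_pos_opNorm_add_smul_sq_lt_of_inner_lt (hk0 : 0 ≤ k) (hk : k < ‖T‖)
    (hTu : ∀ u ∈ H₀, ‖T u‖ = ‖T‖ * ‖u‖) (hTw : ∀ w ∈ H₀ᗮ, ‖T w‖ ≤ k * ‖w‖) (ha : 0 ≤ a)
    (hgap : ∀ x ∈ H₀, ‖x‖ = 1 → a < |⟪T x, A x⟫|) {x₀ : H} (hx₀ : x₀ ∈ H₀) (hx₀1 : ‖x₀‖ = 1)
    (hneg : ⟪T x₀, A x₀⟫ < -a) :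
    ∃ l > 0, ‖T + l • A‖ ^ 2 < ‖T‖ ^ 2 - 2 * l * a := by
  -- `x ↦ ⟪T x, A x⟫` is continuous and even, so its sign at `x₀` propagates over the unit sphere
  have hneg' : ∀ x : H₀, x ∈ Metric.sphere 0 1 → a < -⟪T x, A x⟫ := by
    intro x hx
    rw [mem_sphere_zero_iff_norm, Submodule.coe_norm] at hx
    by_contra! hxa
    obtain ⟨z, hz, hz1, hgz⟩ := H₀.exists_mem_norm_eq_one_apply_eq_of_even
      (f := fun x => ⟪T x, A x⟫) (by fun_prop) (fun x => by simp) hx₀ x.2 hx₀1 hx hneg.le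
      (by linarith)
    have := hgap z hz hz1
    rw [hgz, abs_neg, abs_of_nonneg ha] at this
    exact this.false
  obtain ⟨b, hab, hb⟩ := (isCompact_sphere (0 : H₀) 1).exists_forall_le'
    (f := fun x : H₀ => -⟪T x, A x⟫) (by fun_prop) hneg'
  refine exists_pos_opNorm_add_smul_sq_lt hk0 hk hTu hTw (ha.trans hab.le)
    (fun u hu => inner_map_le_of_forall_norm_eq_one T A (fun y hy hy1 => ?_) hu) hab
  have := hb ⟨y, hy⟩ (by simpa using hy1)
  dsimp only at this
  linarith

lemma exists_opNorm_add_smul_sq_lt (hk0 : 0 ≤ k) (hk : k < ‖T‖)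
    (hTu : ∀ u ∈ H₀, ‖T u‖ = ‖T‖ * ‖u‖) (hTw : ∀ w ∈ H₀ᗮ, ‖T w‖ ≤ k * ‖w‖) (ha : 0 ≤ a)
    (hgap : ∀ x ∈ H₀, ‖x‖ = 1 → a < |⟪T x, A x⟫|) {x₀ : H} (hx₀ : x₀ ∈ H₀) (hx₀1 : ‖x₀‖ = 1) :
    ∃ l : ℝ, ‖T + l • A‖ ^ 2 < ‖T‖ ^ 2 - 2 * |l| * a := by
  rcases lt_abs.1 (hgap x₀ hx₀ hx₀1) with hpos | hneg
  · have hgap' : ∀ x ∈ H₀, ‖x‖ = 1 → a < |⟪T x, (-A) x⟫| := by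
      simpa only [neg_apply, inner_neg_right, abs_neg] using hgap
    obtain ⟨l, hl, hlt⟩ := exists_pos_opNorm_add_smul_sq_lt_of_inner_lt hk0 hk hTu hTw ha hgap'
      hx₀ hx₀1 (by simpa using hpos)
    refine ⟨-l, ?_⟩
    rwa [neg_smul, ← smul_neg, abs_neg, abs_of_pos hl]
  · obtain ⟨l, hl, hlt⟩ := exists_pos_opNorm_add_smul_sq_lt_of_inner_lt hk0 hk hTu hTw ha hgap
      hx₀ hx₀1 (by linarith)
    exact ⟨l, by rwa [abs_of_pos hl]⟩

end Perturbation

lemma norm_map_le_sSup_mul_norm {H F : Type*} [NormedAddCommGroup H] [NormedSpace ℝ H]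
    [NormedAddCommGroup F] [NormedSpace ℝ F] (T : H →L[ℝ] F) (K : Submodule ℝ H) {w : H}
    (hw : w ∈ K) : ‖T w‖ ≤ sSup {r : ℝ | ∃ z ∈ K, ‖z‖ = 1 ∧ r = ‖T z‖} * ‖w‖ := by
  have hbdd : BddAbove {r : ℝ | ∃ z ∈ K, ‖z‖ = 1 ∧ r = ‖T z‖} := by
    refine ⟨‖T‖, ?_⟩
    rintro _ ⟨z, -, hz1, rfl⟩
    simpa [hz1] using T.le_opNorm z
  exact norm_map_le_mul_norm_of_forall_norm_eq_one T
    (fun z hz hz1 => le_csSup hbdd ⟨z, hz, hz1, rfl⟩) hw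

theorem approx_B_orth_iff_inner_le_of_subset_general
    {H : Type*} [NormedAddCommGroup H] [InnerProductSpace ℝ H]
    (T : H →L[ℝ] H) (H₀ : Submodule ℝ H) [FiniteDimensional ℝ H₀]
    (hMT : {x : H | ‖x‖ = 1 ∧ ‖T x‖ = ‖T‖} = {x : H | x ∈ H₀ ∧ ‖x‖ = 1})
    (hsup : sSup {r : ℝ | ∃ z ∈ H₀ᗮ, ‖z‖ = 1 ∧ r = ‖T z‖} < ‖T‖)
    (A : H →L[ℝ] H)
    (hsubset : {x : H | ‖x‖ = 1 ∧ ‖T x‖ = ‖T‖} ⊆ {x : H | ‖x‖ = 1 ∧ ‖A x‖ = ‖A‖})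
    (ε : ℝ) (hε0 : 0 ≤ ε) :
    (∀ l : ℝ, ‖T + l • A‖ ^ 2 ≥ ‖T‖ ^ 2 - 2 * ε * ‖T‖ * ‖l • A‖) ↔
      ∃ x : H, ‖x‖ = 1 ∧ ‖T x‖ = ‖T‖ ∧ |⟪T x, A x⟫| ≤ ε * ‖T x‖ * ‖A x‖ := by
  have hattain : ∀ x ∈ H₀, ‖x‖ = 1 → ‖T x‖ = ‖T‖ := fun _ hx hx1 => (hMT.ge ⟨hx, hx1⟩).2
  have hTu : ∀ u ∈ H₀, ‖T u‖ = ‖T‖ * ‖u‖ := fun _ =>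
    norm_map_eq_mul_norm_of_forall_norm_eq_one T hattain
  have hk0 : 0 ≤ sSup {r : ℝ | ∃ z ∈ H₀ᗮ, ‖z‖ = 1 ∧ r = ‖T z‖} :=
    Real.sSup_nonneg (by rintro _ ⟨z, -, -, rfl⟩; positivity)
  have hTw := fun w (hw : w ∈ H₀ᗮ) => norm_map_le_sSup_mul_norm T H₀ᗮ hw
  obtain ⟨x₀, hx₀, hx₀1⟩ : ∃ x ∈ H₀, ‖x‖ = 1 := by
    have hH₀ : H₀ ≠ ⊥ := by
      rintro rfl
      exact hsup.not_ge (T.opNorm_le_bound hk0 fun w => hTw w (by simp))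
    obtain ⟨u, hu, hu0⟩ := Submodule.exists_mem_ne_zero_of_ne_bot hH₀
    exact ⟨_, H₀.smul_mem _ hu, norm_smul_inv_norm (𝕜 := ℝ) hu0⟩
  refine ⟨fun horth => ?_, fun ⟨x, hx1, hTx, hle⟩ =>
    opNorm_add_smul_sq_ge_of_inner_le hx1 hTx hε0 hle⟩
  by_contra! hgap
  have hgap' : ∀ x ∈ H₀, ‖x‖ = 1 → ε * ‖T‖ * ‖A‖ < |⟪T x, A x⟫| := fun x hx hx1 => by
    have hTx := hattain x hx hx1
    simpa only [hTx, (hsubset ⟨hx1, hTx⟩).2] using hgap x hx1 hTx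
  obtain ⟨l, hl⟩ := exists_opNorm_add_smul_sq_lt hk0 hsup hTu hTw (by positivity) hgap' hx₀ hx₀1
  have := horth l
  rw [norm_smul, Real.norm_eq_abs] at this
  linarith

/-- Let `T` be a bounded operator on a real Hilbert space whose norm attainment set
is the unit sphere of a finite dimensional subspace `H₀`, with the norm of `T` on
`H₀ᗮ` strictly smaller than `‖T‖`, and let `A` satisfy `M_T ⊆ M_A`. Then
`T ⊥_B^ε A` iff there is `x ∈ M_T` with `|⟨Tx, Ax⟩| ≤ ε‖Tx‖‖Ax‖`. -/
theorem approx_B_orth_iff_inner_le_of_subset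
    {H : Type*} [NormedAddCommGroup H] [InnerProductSpace ℝ H] [CompleteSpace H]
    (T : H →L[ℝ] H) (H₀ : Submodule ℝ H) [FiniteDimensional ℝ H₀]
    (hMT : {x : H | ‖x‖ = 1 ∧ ‖T x‖ = ‖T‖} = {x : H | x ∈ H₀ ∧ ‖x‖ = 1})
    (hsup : sSup {r : ℝ | ∃ z ∈ H₀ᗮ, ‖z‖ = 1 ∧ r = ‖T z‖} < ‖T‖)
    (A : H →L[ℝ] H)
    (hsubset : {x : H | ‖x‖ = 1 ∧ ‖T x‖ = ‖T‖} ⊆ {x : H | ‖x‖ = 1 ∧ ‖A x‖ = ‖A‖})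
    (ε : ℝ) (hε0 : 0 ≤ ε) (hε1 : ε < 1) :
    (∀ l : ℝ, ‖T + l • A‖ ^ 2 ≥ ‖T‖ ^ 2 - 2 * ε * ‖T‖ * ‖l • A‖) ↔
      ∃ x : H, ‖x‖ = 1 ∧ ‖T x‖ = ‖T‖ ∧ |⟪T x, A x⟫| ≤ ε * ‖T x‖ * ‖A x‖ :=
  approx_B_orth_iff_inner_le_of_subset_general T H₀ hMT hsup A hsubset ε hε0
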